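/- Let f : ℝ → ℝ be a bijection that maps intervals to intervals (i.e., for every interval J ⊆ ℝ, f(J) is an interval). Then f is continuous. -/

import Mathlib

/-! Let `a ≤ c ≤ b`. If `f c` were not between `f a` and `f b`, one of `f a`, `f b` would lie between
`f c` and the other, hence in both intervals `f '' [a, c]` and `f '' [c, b]`; injectivity forces it
to equal `f c`. So `f` is monotone or antitone, and a monotone surjection of `ℝ` has no jumps. -/

open Set Function
open scoped Interval

lemma mem_uIcc_or_mem_uIcc_or_mem_uIcc {α : Type*} [LinearOrder α] (x y z : α) :
    x ∈ [[y, z]] ∨ y ∈ [[x, z]] ∨ z ∈ [[y, x]] := by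
  simp only [mem_uIcc]
  rcases le_total x y with hxy | hxy <;> rcases le_total y z with hyz | hyz <;>
    rcases le_total x z with hxz | hxz <;> tauto

section IntervalPreserving

variable {α β : Type*} [LinearOrder α] [LinearOrder β] {f : α → β}

lemma Function.Injective.map_mem_uIcc_of_ordConnected_image (hf : Injective f)
    (hI : ∀ a b, (f '' Icc a b).OrdConnected) {a b c : α} (hac : a ≤ c) (hcb : c ≤ b) :
    f c ∈ [[f a, f b]] := by
  rcases mem_uIcc_or_mem_uIcc_or_mem_uIcc (f c) (f a) (f b) with hc | ha | hb
  · exact hc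
  · obtain ⟨x, hx, hxa⟩ := (hI c b).uIcc_subset (mem_image_of_mem f ⟨le_rfl, hcb⟩)
      (mem_image_of_mem f ⟨hcb, le_rfl⟩) ha
    obtain rfl : c = a := le_antisymm (hf hxa ▸ hx.1) hac
    exact left_mem_uIcc
  · obtain ⟨x, hx, hxb⟩ := (hI a c).uIcc_subset (mem_image_of_mem f ⟨le_rfl, hac⟩)
      (mem_image_of_mem f ⟨hac, le_rfl⟩) hb
    obtain rfl : c = b := le_antisymm hcb (hf hxb ▸ hx.2)
    exact right_mem_uIcc

lemma Function.Injective.monotone_or_antitone_of_ordConnected_image (hf : Injective f)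
    (hI : ∀ a b, (f '' Icc a b).OrdConnected) : Monotone f ∨ Antitone f := by
  refine monotone_or_antitone_iff_uIcc.mpr fun a b c hc => ?_
  rcases mem_uIcc.mp hc with ⟨hac, hcb⟩ | ⟨hbc, hca⟩
  · exact hf.map_mem_uIcc_of_ordConnected_image hI hac hcb
  · exact uIcc_comm (f b) (f a) ▸ hf.map_mem_uIcc_of_ordConnected_image hI hbc hca

end IntervalPreserving

theorem Antitone.continuous_of_surjective {α β : Type*} [LinearOrder α] [TopologicalSpace α]
    [OrderTopology α] [LinearOrder β] [TopologicalSpace β] [OrderTopology β] [DenselyOrdered β]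
    {f : α → β} (h_anti : Antitone f) (h_surj : Surjective f) : Continuous f :=
  continuous_ofDual.comp <|
    h_anti.dual_right.continuous_of_surjective (OrderDual.toDual.surjective.comp h_surj)

/-- A bijection of ℝ that maps intervals to intervals is continuous. -/
theorem interval_preserving_bijection_continuous (f : ℝ → ℝ)
    (hbij : Function.Bijective f)
    (hint : ∀ J : Set ℝ, J.OrdConnected → (f '' J).OrdConnected) :
    Continuous f := by
  have hIcc : ∀ a b, (f '' Icc a b).OrdConnected := fun a b => hint _ ordConnected_Icc
  rcases hbij.injective.monotone_or_antitone_of_ordConnected_image hIcc with hmono | hanti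
  · exact hmono.continuous_of_surjective hbij.surjective
  · exact hanti.continuous_of_surjective hbij.surjective
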